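/- arXiv:2011.07604 — 2 statements merged into one kernel-verified Lean document; each statement's English description precedes it below -/
import Mathlib

section
/- Let n ≥ 3 and let P be an n×n row-stochastic matrix of star form with center 1: P(j,1) = 1 and P(j,k) = 0 for all j ∈ {2,…,n}, k ≠ 1, and row 1 satisfying P(1,1) = p with 0 < p < 1. Let P₁ be the matrix equal to P except in row 1, where P₁(1,1) = 0 and P₁(1,j) = P(1,j)/(1−p) for j ∈ {2,…,n}. Then for every τ ≥ 1 and all i, j ∈ {2,…,n}, Σ_{t=1}^{τ} F¹_t(i,j) ≥ Σ_{t=1}^{τ} F_t(i,j), where F¹_t and F_t are the first-hitting-time probability matrices of P₁ and P respectively; i.e., removing the self-loop at the center of a star never decreases the capture probability between leaves. -/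
/-! A star with center `c` sends every leaf back to `c`, so a leaf `j` is reached from a leaf
exactly one step after it is reached from `c`. Writing `S m` for the probability of reaching `j`
from `c` within `m` steps, `p = P c c`, `r = P c j` and `q` for the mass `c` sends to the other
leaves, first-step analysis gives `S (m+2) = r + p S (m+1) + q S m`; without the self-loop it
gives `(1 - p) S₁ (m+2) = r + q S₁ m`. Since `S₁` is nondecreasing, `S ≤ S₁` follows by two-step
induction. -/

/-- First-hitting-time probability matrices: `hitF P t` is `F_{t+1}`, i.e.
`F_1 = P` and `F_{k+1} = P (F_k - Diag(F_k))`. -/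
def hitF {α : Type*} [Fintype α] [DecidableEq α] (P : Matrix α α ℝ) : ℕ → Matrix α α ℝ
  | 0 => P
  | k + 1 => P * (hitF P k - Matrix.diagonal fun i => hitF P k i i)

open Finset

section

variable {α : Type*} [Fintype α] [DecidableEq α]

/-- `captureProb Q m a j` is `ℙ(T_aj ≤ m)`. -/
def captureProb (Q : Matrix α α ℝ) (m : ℕ) (a j : α) : ℝ :=
  ∑ t ∈ range m, hitF Q t a j

def IsStar (Q : Matrix α α ℝ) (c : α) : Prop :=
  ∀ b, b ≠ c → Q b c = 1 ∧ ∀ k, k ≠ c → Q b k = 0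

theorem hitF_nonneg {Q : Matrix α α ℝ} (hQ : ∀ a b, 0 ≤ Q a b) (k : ℕ) (a b : α) :
    0 ≤ hitF Q k a b := by
  induction k generalizing a b with
  | zero => exact hQ a b
  | succ k ih =>
    refine sum_nonneg fun x _ => mul_nonneg (hQ a x) ?_
    by_cases hx : x = b
    · subst hx; simp
    · simpa [Matrix.diagonal_apply_ne _ hx] using ih x b

theorem hitF_succ_apply (Q : Matrix α α ℝ) (k : ℕ) (a j : α) :
    hitF Q (k + 1) a j = ∑ b ∈ univ.erase j, Q a b * hitF Q k b j := by
  rw [hitF, Matrix.mul_apply, ← sum_erase univ (a := j) (by simp)]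
  refine sum_congr rfl fun b hb => ?_
  rw [Matrix.sub_apply, Matrix.diagonal_apply_ne _ (ne_of_mem_erase hb), sub_zero]

theorem captureProb_succ (Q : Matrix α α ℝ) (m : ℕ) (a j : α) :
    captureProb Q (m + 1) a j = Q a j + ∑ b ∈ univ.erase j, Q a b * captureProb Q m b j := by
  simp only [captureProb, sum_range_succ', hitF_succ_apply, mul_sum]
  rw [sum_comm, add_comm]
  rfl

theorem captureProb_mono {Q : Matrix α α ℝ} (hQ : ∀ a b, 0 ≤ Q a b) (a j : α) :
    Monotone fun m => captureProb Q m a j := by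
  refine monotone_nat_of_le_succ fun m => ?_
  simpa [captureProb, sum_range_succ] using hitF_nonneg hQ m a j

section Star

variable {Q : Matrix α α ℝ} {c j : α}

theorem IsStar.captureProb_succ_leaf (hQ : IsStar Q c) (hj : j ≠ c) {b : α} (hb : b ≠ c)
    (m : ℕ) : captureProb Q (m + 1) b j = captureProb Q m c j := by
  have hc : c ∈ univ.erase j := mem_erase.2 ⟨hj.symm, mem_univ c⟩
  rw [captureProb_succ, (hQ b hb).2 j hj, zero_add,
    sum_eq_single_of_mem c hc fun k _ hk => by rw [(hQ b hb).2 k hk, zero_mul],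
    (hQ b hb).1, one_mul]

theorem IsStar.captureProb_add_two_center (hQ : IsStar Q c) (hj : j ≠ c) (m : ℕ) :
    captureProb Q (m + 2) c j = Q c j + Q c c * captureProb Q (m + 1) c j +
      (∑ b ∈ (univ.erase j).erase c, Q c b) * captureProb Q m c j := by
  have hc : c ∈ univ.erase j := mem_erase.2 ⟨hj.symm, mem_univ c⟩
  rw [captureProb_succ, ← add_sum_erase _ _ hc, ← add_assoc, sum_mul]
  congr 1
  refine sum_congr rfl fun b hb => ?_
  rw [hQ.captureProb_succ_leaf hj (ne_of_mem_erase hb)]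

end Star

theorem le_of_two_step_recurrence {S T : ℕ → ℝ} {p q r : ℝ} (hp : 0 ≤ p) (hq : 0 ≤ q)
    (hT : Monotone T) (h₀ : S 0 ≤ T 0) (h₁ : S 1 ≤ T 1)
    (hS : ∀ m, S (m + 2) = r + p * S (m + 1) + q * S m)
    (hTrec : ∀ m, r + q * T m = (1 - p) * T (m + 2)) (m : ℕ) : S m ≤ T m := by
  induction m using Nat.twoStepInduction with
  | zero => exact h₀
  | one => exact h₁
  | more m ihm ihm1 =>
    calc S (m + 2) = r + p * S (m + 1) + q * S m := hS m
      _ ≤ r + p * T (m + 2) + q * T m := by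
        gcongr
        exact ihm1.trans (hT (Nat.le_succ _))
      _ = T (m + 2) := by linarith [hTrec m]

end

/-- Removing the self-loop at the center of a star never decreases the capture
probability between leaves: `P` is a star strategy with center `1` (index `⟨0,_⟩`),
self-loop probability `P(1,1) = p ∈ (0,1)`, and `P₁` rescales row `1` by `1/(1-p)`
after removing the self-loop. Then `ℙ¹(T_ij ≤ τ) ≥ ℙ(T_ij ≤ τ)` for all leaves `i, j`. -/
theorem stmt_13 (n : ℕ) (hn : 3 ≤ n) (P P₁ : Matrix (Fin n) (Fin n) ℝ)
    (hP0 : ∀ a b, 0 ≤ P a b)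
    (hleafrows : ∀ j : Fin n, j ≠ ⟨0, by omega⟩ →
      P j ⟨0, by omega⟩ = 1 ∧ ∀ k : Fin n, k ≠ ⟨0, by omega⟩ → P j k = 0)
    (p : ℝ) (hp : P ⟨0, by omega⟩ ⟨0, by omega⟩ = p) (hp1 : p < 1)
    (hP₁row : P₁ ⟨0, by omega⟩ ⟨0, by omega⟩ = 0 ∧
      ∀ j : Fin n, j ≠ ⟨0, by omega⟩ → P₁ ⟨0, by omega⟩ j = P ⟨0, by omega⟩ j / (1 - p))
    (hP₁rest : ∀ a : Fin n, a ≠ ⟨0, by omega⟩ → ∀ b : Fin n, P₁ a b = P a b)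
    (τ : ℕ) (i j : Fin n) (hi : i ≠ ⟨0, by omega⟩) (hj : j ≠ ⟨0, by omega⟩) :
    ∑ t ∈ Finset.range τ, hitF P t i j ≤ ∑ t ∈ Finset.range τ, hitF P₁ t i j := by
  set c : Fin n := ⟨0, by omega⟩
  obtain ⟨hP₁cc, hP₁c⟩ := hP₁row
  have h1p : 0 < 1 - p := by linarith
  have hstar : IsStar P c := hleafrows
  have hstar₁ : IsStar P₁ c := fun b hb => by simpa only [hP₁rest b hb] using hleafrows b hb
  have hP₁0 : ∀ a b, 0 ≤ P₁ a b := by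
    intro a b
    by_cases ha : a = c
    · subst ha
      by_cases hb : b = c
      · rw [hb, hP₁cc]
      · rw [hP₁c b hb]; exact div_nonneg (hP0 c b) h1p.le
    · rw [hP₁rest a ha]; exact hP0 a b
  have hq₁ : ∑ b ∈ (univ.erase j).erase c, P₁ c b =
      (∑ b ∈ (univ.erase j).erase c, P c b) / (1 - p) := by
    rw [sum_div]
    exact sum_congr rfl fun b hb => hP₁c b (ne_of_mem_erase hb)
  change captureProb P τ i j ≤ captureProb P₁ τ i j
  rcases τ with _ | m
  · simp [captureProb]
  rw [hstar.captureProb_succ_leaf hj hi, hstar₁.captureProb_succ_leaf hj hi]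
  have hp0 : 0 ≤ p := hp ▸ hP0 c c
  refine le_of_two_step_recurrence (S := fun m => captureProb P m c j) (r := P c j) hp0
    (sum_nonneg fun b _ => hP0 c b) (captureProb_mono hP₁0 c j) (by simp [captureProb]) ?_
    (fun m => by rw [hstar.captureProb_add_two_center hj, hp]) (fun m => ?_) m
  · simp only [captureProb, range_one, sum_singleton, hitF, hP₁c j hj]
    exact le_div_self (hP0 c j) h1p (by linarith)
  · rw [hstar₁.captureProb_add_two_center hj, hP₁cc, hq₁, hP₁c j hj]
    field_simp
    ring
end

section
/- Let n ≥ 3 and let τ be an integer with n−1 ≤ τ ≤ 2n−3. Let S be the set of n×n row-stochastic matrices Q with Q(j,k) = 0 whenever |j−k| > 1 (strategies conforming to the line graph on nodes 1,…,n). Suppose P* ∈ S is irreducible (its transition digraph, with edges (a,b) whenever P*(a,b) > 0, is strongly connected) and P* maximizes the worst-case capture probability over S, i.e., min_{i,j} Σ_{t=1}^{τ} F*_t(i,j) ≥ min_{i,j} Σ_{t=1}^{τ} F^Q_t(i,j) for every Q ∈ S. Then Σ_{t=1}^{τ} F*_t(1,n) = Σ_{t=1}^{τ} F*_t(n,1),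 i.e., the optimal line-graph strategy equalizes the end-to-end capture probabilities in the two directions. -/
/-!
Write `C(i, j)` for the probability of visiting `j` from `i` within `τ` steps. On a line the
worst pair is a pair of end points: moving the start towards the target or the target towards
the start only helps, so every `C(i, j)` with `i < j` dominates `C(1, n)`; a return to `i` has
to pass through a neighbour, from which it is at least as likely as an end-to-end crossing with
one step less. Hence the worst-case capture probability is `min (C(1, n), C(n, 1))`.

If `C(1, n) < C(n, 1)`, let node `n - 1` jump straight to `n` with extra probability `ε`. This
strictly increases `C(1, n)`: as `τ ≥ n - 1`, the walk from `1` reaches `n - 1` in time, and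
from there it is not yet sure to hit `n`. Since `C(n, 1)` depends continuously on `ε`, it stays
above the old `C(1, n)` for small `ε`, so the worst case strictly improves, contradicting
optimality. The case `C(n, 1) < C(1, n)` is the mirror image under `i ↦ n + 1 - i`.
-/

open Finset Matrix Filter Topology

lemma exists_pos_crossing_of_path {α R : Type*} [Zero R] [LT R] {P : Matrix α α R}
    {m : ℕ} {v : ℕ → α} (hv : ∀ t < m, 0 < P (v t) (v (t + 1))) (p : α → Prop)
    (h0 : ¬ p (v 0)) (hm : p (v m)) : ∃ x y, 0 < P x y ∧ ¬ p x ∧ p y := by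
  induction m generalizing v with
  | zero => exact absurd hm h0
  | succ m ih =>
    by_cases h1 : p (v 1)
    · exact ⟨v 0, v 1, hv 0 m.succ_pos, h0, h1⟩
    · exact ih (v := fun s => v (s + 1)) (fun t ht => hv (t + 1) (by omega)) h1 hm

section RowAverage

variable {α : Type*} [Fintype α] {P : Matrix α α ℝ}

lemma sum_mul_le_sum_mul_of_nonneg (hP : ∀ a b, 0 ≤ P a b) (i : α) {f g : α → ℝ}
    (h : ∀ l, P i l ≠ 0 → f l ≤ g l) : ∑ l, P i l * f l ≤ ∑ l, P i l * g l := by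
  refine sum_le_sum fun l _ => ?_
  by_cases hl : P i l = 0
  · simp [hl]
  · exact mul_le_mul_of_nonneg_left (h l hl) (hP i l)

variable [DecidableEq α]

lemma sum_mul_le_of_mem_rowStochastic (hP : P ∈ rowStochastic ℝ α) (i : α) {f : α → ℝ} {c : ℝ}
    (h : ∀ l, P i l ≠ 0 → f l ≤ c) : ∑ l, P i l * f l ≤ c := by
  calc ∑ l, P i l * f l ≤ ∑ l, P i l * c := sum_mul_le_sum_mul_of_nonneg hP.1 i h
    _ = c := by rw [← sum_mul, sum_row_of_mem_rowStochastic hP, one_mul]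

lemma le_sum_mul_of_mem_rowStochastic (hP : P ∈ rowStochastic ℝ α) (i : α) {f : α → ℝ} {c : ℝ}
    (h : ∀ l, P i l ≠ 0 → c ≤ f l) : c ≤ ∑ l, P i l * f l := by
  have := sum_mul_le_of_mem_rowStochastic hP i (f := -f) (c := -c) fun l hl => neg_le_neg (h l hl)
  simpa [mul_neg, sum_neg_distrib] using this

end RowAverage

section Divert

variable {α : Type*} [DecidableEq α] {P : Matrix α α ℝ} {r j : α}

def divert (P : Matrix α α ℝ) (r j : α) (ε : ℝ) : Matrix α α ℝ :=
  P.updateRow r ((1 - ε) • P r + ε • Pi.single j 1)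

lemma divert_zero : divert P r j 0 = P := by simp [divert]

lemma continuous_divert (P : Matrix α α ℝ) (r j : α) : Continuous (divert P r j) :=
  continuous_const.matrix_updateRow r (by fun_prop)

end Divert

section Capture

variable {α : Type*} [Fintype α] [DecidableEq α] {P : Matrix α α ℝ}

def capture (P : Matrix α α ℝ) (T : ℕ) (i j : α) : ℝ :=
  ∑ t ∈ range T, hitF P t i j

/-- Like `capture`, except that a walk started at `j` counts as having already visited `j`. -/
def reach (P : Matrix α α ℝ) (T : ℕ) (l j : α) : ℝ :=
  if l = j then 1 else capture P T l j

lemma hitF_succ_apply_s15 (P : Matrix α α ℝ) (t : ℕ) (i j : α) :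
    hitF P (t + 1) i j = ∑ l, P i l * if l = j then 0 else hitF P t l j := by
  simp only [hitF, mul_apply, Matrix.sub_apply, diagonal_apply]
  congr 1 with l
  split_ifs with h <;> simp [h]

@[simp] lemma capture_zero (P : Matrix α α ℝ) (i j : α) : capture P 0 i j = 0 := by
  simp [capture]

lemma capture_succ (P : Matrix α α ℝ) (T : ℕ) (i j : α) :
    capture P (T + 1) i j = ∑ l, P i l * reach P T l j := by
  have h : ∀ l, P i l * reach P T l j = (if l = j then P i l else 0) +
      ∑ t ∈ range T, P i l * if l = j then 0 else hitF P t l j := by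
    intro l
    by_cases hl : l = j <;> simp [reach, capture, hl, mul_sum]
  simp only [capture, sum_range_succ', hitF_succ_apply_s15, h, sum_add_distrib, sum_ite_eq',
    mem_univ, if_true]
  rw [sum_comm, add_comm]
  rfl

lemma reach_self (P : Matrix α α ℝ) (T : ℕ) (j : α) : reach P T j j = 1 := if_pos rfl

lemma reach_of_ne {l j : α} (h : l ≠ j) (T : ℕ) : reach P T l j = capture P T l j := if_neg h

lemma hitF_nonneg_s15 (hP : ∀ a b, 0 ≤ P a b) (t : ℕ) (i j : α) : 0 ≤ hitF P t i j := by
  induction t generalizing i with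
  | zero => exact hP i j
  | succ t ih =>
    rw [hitF_succ_apply_s15]
    exact sum_nonneg fun l _ => mul_nonneg (hP i l) (by split_ifs <;> simp [ih])

lemma capture_mono (hP : ∀ a b, 0 ≤ P a b) (i j : α) : Monotone fun T => capture P T i j :=
  fun _ _ h => sum_le_sum_of_subset_of_nonneg (range_mono h) fun t _ _ => hitF_nonneg_s15 hP t i j

lemma capture_le_one (hP : P ∈ rowStochastic ℝ α) (T : ℕ) (i j : α) : capture P T i j ≤ 1 := by
  induction T generalizing i with
  | zero => simp
  | succ T ih =>
    rw [capture_succ]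
    exact sum_mul_le_of_mem_rowStochastic hP i fun l _ => by
      unfold reach; split_ifs
      exacts [le_rfl, ih l]

lemma reach_le_one (hP : P ∈ rowStochastic ℝ α) (T : ℕ) (l j : α) : reach P T l j ≤ 1 := by
  unfold reach; split_ifs
  exacts [le_rfl, capture_le_one hP T l j]

lemma capture_lt_one (hP : P ∈ rowStochastic ℝ α) {j : α} (h : ∀ i ≠ j, ∃ w ≠ j, 0 < P i w)
    (T : ℕ) {i : α} (hi : i ≠ j) : capture P T i j < 1 := by
  induction T generalizing i with
  | zero => simp
  | succ T ih =>
    obtain ⟨w, hwj, hw⟩ := h i hi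
    rw [capture_succ, ← sum_row_of_mem_rowStochastic hP i]
    refine sum_lt_sum (fun l _ => mul_le_of_le_one_right (hP.1 i l) (reach_le_one hP T l j))
      ⟨w, mem_univ w, ?_⟩
    rw [reach_of_ne hwj]
    exact mul_lt_of_lt_one_right hw (ih hwj)

lemma hitF_submatrix {β : Type*} [Fintype β] [DecidableEq β] (e : β ≃ α) (t : ℕ) :
    hitF (P.submatrix e e) t = (hitF P t).submatrix e e := by
  induction t with
  | zero => rfl
  | succ t ih =>
    ext i j
    rw [hitF_succ_apply_s15, submatrix_apply, hitF_succ_apply_s15, ih]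
    exact Fintype.sum_equiv e _ _ fun l => by simp [e.injective.eq_iff]

lemma capture_submatrix {β : Type*} [Fintype β] [DecidableEq β] (e : β ≃ α) (T : ℕ) (i j : β) :
    capture (P.submatrix e e) T i j = capture P T (e i) (e j) := by
  simp [capture, hitF_submatrix]

lemma continuous_capture {X : Type*} [TopologicalSpace X] {M : X → Matrix α α ℝ}
    (hM : Continuous M) (T : ℕ) (i j : α) : Continuous fun x => capture (M x) T i j := by
  have hitF_cont : ∀ t, Continuous fun x => hitF (M x) t := by
    intro t
    induction t with
    | zero => exact hM
    | succ t ih =>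
      exact hM.matrix_mul (ih.sub (continuous_pi fun i => ih.matrix_elem i i).matrix_diagonal)
  exact continuous_finsetSum _ fun t _ => (hitF_cont t).matrix_elem i j

def worstCapture [Nonempty α] (P : Matrix α α ℝ) (T : ℕ) : ℝ :=
  univ.inf' univ_nonempty fun p : α × α => capture P T p.1 p.2

section Worst

variable [Nonempty α] {T : ℕ}

lemma worstCapture_le (i j : α) : worstCapture P T ≤ capture P T i j :=
  inf'_le _ (mem_univ (i, j))

lemma le_worstCapture {c : ℝ} (h : ∀ i j, c ≤ capture P T i j) : c ≤ worstCapture P T :=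
  le_inf' _ _ fun p _ => h p.1 p.2

lemma worstCapture_submatrix {β : Type*} [Fintype β] [DecidableEq β] [Nonempty β] (e : β ≃ α) :
    worstCapture (P.submatrix e e) T = worstCapture P T := by
  refine le_antisymm (le_worstCapture fun a b => ?_) (le_worstCapture fun i j => ?_)
  · simpa [capture_submatrix] using
      worstCapture_le (P := P.submatrix e e) (T := T) (e.symm a) (e.symm b)
  · rw [capture_submatrix]
    exact worstCapture_le _ _

end Worst

section Divert

variable {r j : α} {ε : ℝ} {T : ℕ}

lemma divert_mem_rowStochastic (hP : P ∈ rowStochastic ℝ α) (hε0 : 0 ≤ ε) (hε1 : ε ≤ 1) :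
    divert P r j ε ∈ rowStochastic ℝ α := by
  rw [mem_rowStochastic_iff_sum]
  refine ⟨fun a b => ?_, fun a => ?_⟩
  · rcases eq_or_ne a r with rfl | ha
    · have := hP.1 a b
      simp only [divert, updateRow_self, Pi.add_apply, Pi.smul_apply, smul_eq_mul]
      have : 0 ≤ (Pi.single j 1 : α → ℝ) b := by rw [Pi.single_apply]; split_ifs <;> norm_num
      positivity
    · simpa [divert, ha] using hP.1 a b
  · rcases eq_or_ne a r with rfl | ha
    · simp [divert, sum_add_distrib, ← mul_sum, sum_row_of_mem_rowStochastic hP]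
    · simpa [divert, ha] using sum_row_of_mem_rowStochastic hP a

lemma capture_succ_divert_of_ne {i j' : α} (hi : i ≠ r) :
    capture (divert P r j ε) (T + 1) i j' = ∑ l, P i l * reach (divert P r j ε) T l j' := by
  simp [capture_succ, divert, hi]

lemma capture_succ_divert_self :
    capture (divert P r j ε) (T + 1) r j =
      (1 - ε) * ∑ l, P r l * reach (divert P r j ε) T l j + ε := by
  simp [capture_succ, divert, add_mul, sum_add_distrib, mul_sum, mul_assoc, Pi.single_apply,
    reach_self]

lemma capture_le_capture_divert (hP : P ∈ rowStochastic ℝ α) (hε0 : 0 ≤ ε) (hε1 : ε ≤ 1)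
    (T : ℕ) (i : α) : capture P T i j ≤ capture (divert P r j ε) T i j := by
  induction T generalizing i with
  | zero => simp
  | succ T ih =>
    have hsum : ∑ l, P i l * reach P T l j ≤ ∑ l, P i l * reach (divert P r j ε) T l j :=
      sum_mul_le_sum_mul_of_nonneg hP.1 i fun l _ => by
        unfold reach; split_ifs
        exacts [le_rfl, ih l]
    rw [capture_succ]
    rcases eq_or_ne i r with rfl | hi
    · have hle : ∑ l, P i l * reach (divert P i j ε) T l j ≤ 1 :=
        sum_mul_le_of_mem_rowStochastic hP i fun l _ =>
        reach_le_one (divert_mem_rowStochastic hP hε0 hε1) T l j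
      rw [capture_succ_divert_self]
      nlinarith
    · rwa [capture_succ_divert_of_ne hi]

lemma reach_le_reach_divert (hP : P ∈ rowStochastic ℝ α) (hε0 : 0 ≤ ε) (hε1 : ε ≤ 1)
    (T : ℕ) (l : α) : reach P T l j ≤ reach (divert P r j ε) T l j := by
  unfold reach; split_ifs
  exacts [le_rfl, capture_le_capture_divert hP hε0 hε1 T l]

lemma capture_lt_capture_divert_self (hP : P ∈ rowStochastic ℝ α) (hε0 : 0 < ε) (hε1 : ε ≤ 1)
    (h : capture P (T + 1) r j < 1) :
    capture P (T + 1) r j < capture (divert P r j ε) (T + 1) r j := by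
  have hsum : ∑ l, P r l * reach P T l j ≤ ∑ l, P r l * reach (divert P r j ε) T l j :=
    sum_mul_le_sum_mul_of_nonneg hP.1 r fun l _ => reach_le_reach_divert hP hε0.le hε1 T l
  rw [capture_succ] at h ⊢
  rw [capture_succ_divert_self]
  nlinarith

lemma capture_succ_lt_capture_succ_divert (hP : P ∈ rowStochastic ℝ α) (hε0 : 0 ≤ ε) (hε1 : ε ≤ 1)
    {i w : α} (hi : i ≠ r) (hw : 0 < P i w) (hwj : w ≠ j)
    (hlt : capture P T w j < capture (divert P r j ε) T w j) :
    capture P (T + 1) i j < capture (divert P r j ε) (T + 1) i j := by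
  rw [capture_succ, capture_succ_divert_of_ne hi]
  refine sum_lt_sum (fun l _ => mul_le_mul_of_nonneg_left
    (reach_le_reach_divert hP hε0 hε1 T l) (hP.1 i l)) ⟨w, mem_univ w, ?_⟩
  rw [reach_of_ne hwj, reach_of_ne hwj]
  exact mul_lt_mul_of_pos_left hlt hw

end Divert

end Capture

namespace Matrix

variable {R : Type*} [Zero R] {n : ℕ}

def IsTridiagonal (P : Matrix (Fin n) (Fin n) R) : Prop :=
  ∀ j k : Fin n, (j.val + 1 < k.val ∨ k.val + 1 < j.val) → P j k = 0

def SubSuperDiagPos [Preorder R] (P : Matrix (Fin n) (Fin n) R) : Prop :=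
  ∀ i j : Fin n, i.val + 1 = j.val → 0 < P i j ∧ 0 < P j i

variable {P : Matrix (Fin n) (Fin n) R}

lemma IsTridiagonal.le_succ_of_ne_zero (hL : P.IsTridiagonal) {i l : Fin n} (h : P i l ≠ 0) :
    l.val ≤ i.val + 1 ∧ i.val ≤ l.val + 1 := by
  by_contra hc
  exact h (hL i l (by omega))

lemma IsTridiagonal.submatrix_rev (hL : P.IsTridiagonal) :
    (P.submatrix Fin.rev Fin.rev).IsTridiagonal := fun j k h => hL _ _ (by simp; omega)

lemma SubSuperDiagPos.submatrix_rev [Preorder R] (hA : P.SubSuperDiagPos) :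
    (P.submatrix Fin.rev Fin.rev).SubSuperDiagPos := fun i j h =>
  (hA j.rev i.rev (by simp; omega)).symm

lemma SubSuperDiagPos.exists_pos_ne_last [Preorder R] {P : Matrix (Fin (n + 1)) (Fin (n + 1)) R}
    (hA : P.SubSuperDiagPos) (hn : 2 ≤ n) (i : Fin (n + 1)) (hi : i ≠ Fin.last n) :
    ∃ w ≠ Fin.last n, 0 < P i w := by
  have hi : i.val < n := by simpa [Fin.ext_iff, Fin.lt_def] using Fin.lt_last_iff_ne_last.2 hi
  by_cases h : i.val + 1 < n
  · exact ⟨⟨i.val + 1, by omega⟩, by simp [Fin.ext_iff]; omega, (hA _ _ rfl).1⟩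
  · refine ⟨⟨i.val - 1, by omega⟩, by simp [Fin.ext_iff]; omega, (hA _ _ ?_).2⟩
    show i.val - 1 + 1 = i.val
    omega

lemma IsTridiagonal.subSuperDiagPos [Preorder R] (hL : P.IsTridiagonal)
    (hirr : ∀ a b : Fin n, a ≠ b → ∃ m : ℕ, ∃ v : ℕ → Fin n,
      v 0 = a ∧ v m = b ∧ ∀ t < m, 0 < P (v t) (v (t + 1))) :
    P.SubSuperDiagPos := by
  have hcross : ∀ a b : Fin n, a ≠ b → ∀ p : Fin n → Prop, ¬ p a → p b →
      ∃ x y, 0 < P x y ∧ ¬ p x ∧ p y := by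
    intro a b hab p ha hb
    obtain ⟨m, v, rfl, rfl, hv⟩ := hirr a b hab
    exact exists_pos_crossing_of_path hv p ha hb
  intro i j hij
  constructor
  · obtain ⟨x, y, hxy, hx, hy⟩ := hcross i j (by omega) (i < ·) (lt_irrefl i) (by omega)
    have := hL.le_succ_of_ne_zero hxy.ne'
    rwa [show x = i by omega, show y = j by omega] at hxy
  · obtain ⟨x, y, hxy, hx, hy⟩ := hcross j i (by omega) (· ≤ i) (by omega) le_rfl
    have := hL.le_succ_of_ne_zero hxy.ne'
    rwa [show x = j by omega, show y = i by omega] at hxy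

end Matrix

section Line

variable {n : ℕ} {P : Matrix (Fin n) (Fin n) ℝ} {T : ℕ}

lemma Matrix.IsTridiagonal.divert (hL : P.IsTridiagonal) {r j : Fin n} (hrj : r.val + 1 = j.val)
    (ε : ℝ) : (divert P r j ε).IsTridiagonal := by
  intro a b h
  rcases eq_or_ne a r with rfl | ha
  · simp [_root_.divert, hL a b h, Pi.single_apply, Fin.ext_iff]
    omega
  · simpa [_root_.divert, ha] using hL a b h

lemma submatrix_rev_mem_rowStochastic (hP : P ∈ rowStochastic ℝ (Fin n)) :
    P.submatrix Fin.rev Fin.rev ∈ rowStochastic ℝ (Fin n) :=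
  reindex_mem_rowStochastic (e₁ := Fin.revPerm) (e₂ := Fin.revPerm) hP

lemma capture_submatrix_rev (P : Matrix (Fin n) (Fin n) ℝ) (T : ℕ) (i j : Fin n) :
    capture (P.submatrix Fin.rev Fin.rev) T i j = capture P T i.rev j.rev :=
  capture_submatrix Fin.revPerm T i j

lemma worstCapture_submatrix_rev [NeZero n] (P : Matrix (Fin n) (Fin n) ℝ) (T : ℕ) :
    worstCapture (P.submatrix Fin.rev Fin.rev) T = worstCapture P T :=
  worstCapture_submatrix Fin.revPerm

lemma capture_le_capture_start (hP : P ∈ rowStochastic ℝ (Fin n)) (hL : P.IsTridiagonal)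
    {i i' j : Fin n} (hii' : i ≤ i') (hi'j : i' < j) : capture P T i j ≤ capture P T i' j := by
  induction T generalizing i with
  | zero => simp
  | succ T ih =>
    rcases hii'.eq_or_lt with rfl | hlt
    · exact le_rfl
    refine (capture_succ P T i j).trans_le ?_
    refine (sum_mul_le_of_mem_rowStochastic hP i fun l hl => ?_).trans
      (capture_mono hP.1 i' j T.le_succ)
    have := hL.le_succ_of_ne_zero hl
    rw [reach_of_ne (by omega)]
    exact ih (by omega)

lemma capture_le_capture_target (hP : P ∈ rowStochastic ℝ (Fin n)) (hL : P.IsTridiagonal)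
    {i j k : Fin n} (hij : i < j) (hjk : j ≤ k) : capture P T i k ≤ capture P T i j := by
  induction T generalizing i with
  | zero => simp
  | succ T ih =>
    rw [capture_succ, capture_succ]
    refine sum_mul_le_sum_mul_of_nonneg hP.1 i fun l hl => ?_
    have := hL.le_succ_of_ne_zero hl
    rcases eq_or_ne l j with rfl | hlj
    · exact (reach_le_one hP T l k).trans_eq (reach_self P T l).symm
    · rw [reach_of_ne hlj, reach_of_ne (by omega)]
      exact ih (by omega)

lemma capture_succ_le_target (hP : P ∈ rowStochastic ℝ (Fin n)) (hL : P.IsTridiagonal)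
    {i j j' : Fin n} (hij : i < j) (hjj' : j.val + 1 = j'.val) :
    capture P (T + 1) i j' ≤ capture P T i j := by
  induction T generalizing i with
  | zero =>
    rw [capture_succ, capture_zero]
    refine sum_mul_le_of_mem_rowStochastic hP i fun l hl => ?_
    have := hL.le_succ_of_ne_zero hl
    rw [reach_of_ne (by omega), capture_zero]
  | succ T ih =>
    rw [capture_succ, capture_succ P T]
    refine sum_mul_le_sum_mul_of_nonneg hP.1 i fun l hl => ?_
    have := hL.le_succ_of_ne_zero hl
    rw [reach_of_ne (by omega)]
    rcases eq_or_ne l j with rfl | hlj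
    · exact (capture_le_one hP _ _ _).trans_eq (reach_self P T l).symm
    · rw [reach_of_ne hlj]
      exact ih (by omega)

lemma capture_succ_le_start (hP : P ∈ rowStochastic ℝ (Fin n)) (hL : P.IsTridiagonal)
    {i i' j : Fin n} (hii' : i.val + 1 = i'.val) (hi'j : i' < j) :
    capture P (T + 1) i j ≤ capture P T i' j := by
  rw [capture_succ]
  refine sum_mul_le_of_mem_rowStochastic hP i fun l hl => ?_
  have := hL.le_succ_of_ne_zero hl
  rw [reach_of_ne (by omega)]
  exact capture_le_capture_start hP hL (by omega) hi'j

lemma capture_le_capture_inner (hP : P ∈ rowStochastic ℝ (Fin n)) (hL : P.IsTridiagonal)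
    {a b i j : Fin n} (hai : a ≤ i) (hij : i < j) (hjb : j ≤ b) :
    capture P T a b ≤ capture P T i j :=
  (capture_le_capture_target hP hL (hai.trans_lt hij) hjb).trans
    (capture_le_capture_start hP hL hai hij)

end Line

section Ends

variable {n : ℕ} {P : Matrix (Fin (n + 1)) (Fin (n + 1)) ℝ} {T τ : ℕ}

lemma capture_succ_ends_le (hP : P ∈ rowStochastic ℝ (Fin (n + 1))) (hL : P.IsTridiagonal)
    (hn : 2 ≤ n) {l i : Fin (n + 1)} (hli : l.val + 1 = i.val) :
    capture P (T + 1) 0 (Fin.last n) ≤ capture P T l i := by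
  rcases eq_or_ne i (Fin.last n) with rfl | hi
  · calc capture P (T + 1) 0 (Fin.last n) ≤ capture P T ⟨1, by omega⟩ (Fin.last n) :=
          capture_succ_le_start hP hL rfl (by simp [Fin.lt_def]; omega)
      _ ≤ capture P T l (Fin.last n) :=
          capture_le_capture_start hP hL (by simp [Fin.le_def] at hli ⊢; omega) (by omega)
  · have hi : i.val ≤ n - 1 := by simp [Fin.ext_iff] at hi; omega
    calc capture P (T + 1) 0 (Fin.last n) ≤ capture P T 0 ⟨n - 1, by omega⟩ :=
          capture_succ_le_target hP hL (by simp [Fin.lt_def]; omega) (by simp; omega)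
      _ ≤ capture P T l i :=
          capture_le_capture_inner hP hL (Fin.zero_le l) (by omega) (by simp [Fin.le_def]; omega)

lemma min_capture_ends_le (hP : P ∈ rowStochastic ℝ (Fin (n + 1))) (hL : P.IsTridiagonal)
    (hn : 2 ≤ n) (i j : Fin (n + 1)) :
    min (capture P T 0 (Fin.last n)) (capture P T (Fin.last n) 0) ≤ capture P T i j := by
  have hP' := submatrix_rev_mem_rowStochastic hP
  have hL' := hL.submatrix_rev
  rcases lt_trichotomy i j with hij | rfl | hij
  · exact min_le_of_left_le (capture_le_capture_inner hP hL (Fin.zero_le i) hij (Fin.le_last j))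
  · cases T with
    | zero => simp
    | succ T =>
      rw [capture_succ P T i i]
      refine le_sum_mul_of_mem_rowStochastic hP i fun l hl => ?_
      have := hL.le_succ_of_ne_zero hl
      rcases lt_trichotomy l i with hli | rfl | hil
      · rw [reach_of_ne hli.ne]
        exact min_le_of_left_le (capture_succ_ends_le hP hL hn (by omega))
      · rw [reach_self]
        exact min_le_of_left_le (capture_le_one hP _ _ _)
      · rw [reach_of_ne hil.ne']
        have := capture_succ_ends_le hP' hL' hn (T := T) (l := l.rev) (i := i.rev) (by simp; omega)
        simpa [capture_submatrix_rev] using min_le_of_right_le this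
  · have := capture_le_capture_inner hP' hL' (T := T) (Fin.zero_le i.rev) (Fin.rev_lt_rev.2 hij)
      (Fin.le_last j.rev)
    simpa [capture_submatrix_rev] using min_le_of_right_le this

lemma capture_lt_capture_divert_last (hP : P ∈ rowStochastic ℝ (Fin (n + 1)))
    (hA : P.SubSuperDiagPos) (hn : 2 ≤ n) {ε : ℝ} (hε0 : 0 < ε) (hε1 : ε ≤ 1) (i : Fin (n + 1))
    (T : ℕ) (hT : n - i.val ≤ T) (hi : i ≠ Fin.last n) :
    capture P T i (Fin.last n) <
      capture (divert P ⟨n - 1, by omega⟩ (Fin.last n) ε) T i (Fin.last n) := by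
  induction i using Fin.reverseInduction generalizing T with
  | last => exact absurd rfl hi
  | cast i ih =>
    obtain ⟨T, rfl⟩ : ∃ T', T = T' + 1 := ⟨T - 1, by simp at hT; omega⟩
    rcases eq_or_ne i.succ (Fin.last n) with h | h
    · have hr : i.castSucc = ⟨n - 1, by omega⟩ := by ext; simp [Fin.ext_iff] at h ⊢; omega
      rw [hr] at hi ⊢
      exact capture_lt_capture_divert_self hP hε0 hε1
        (capture_lt_one hP (hA.exists_pos_ne_last hn) _ hi)
    · exact capture_succ_lt_capture_succ_divert hP hε0.le hε1
        (by simp [Fin.ext_iff] at h ⊢; omega) (hA _ _ (by simp)).1 h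
        (ih T (by simp at hT ⊢; omega) h)

lemma exists_worstCapture_lt (hP : P ∈ rowStochastic ℝ (Fin (n + 1))) (hL : P.IsTridiagonal)
    (hA : P.SubSuperDiagPos) (hn : 2 ≤ n) (hτ : n ≤ τ)
    (hlt : capture P τ 0 (Fin.last n) < capture P τ (Fin.last n) 0) :
    ∃ Q ∈ rowStochastic ℝ (Fin (n + 1)), Q.IsTridiagonal ∧ worstCapture P τ < worstCapture Q τ := by
  set r : Fin (n + 1) := ⟨n - 1, by omega⟩
  have hr : r.val + 1 = (Fin.last n).val := by simp [r]; omega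
  set Q := divert P r (Fin.last n)
  have hnear : ∀ᶠ ε in 𝓝[>] 0, capture P τ 0 (Fin.last n) < capture (Q ε) τ (Fin.last n) 0 := by
    have hcont :=
      (continuous_capture (continuous_divert P r (Fin.last n)) τ (Fin.last n) 0).tendsto 0
    simp only [divert_zero] at hcont
    exact nhdsWithin_le_nhds (hcont.eventually (lt_mem_nhds hlt))
  obtain ⟨ε, hε, hε0, hε1⟩ := (hnear.and (Ioo_mem_nhdsGT one_pos)).exists
  have hQ := divert_mem_rowStochastic (r := r) (j := Fin.last n) hP hε0.le hε1.le
  refine ⟨Q ε, hQ, hL.divert hr ε, ?_⟩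
  calc worstCapture P τ ≤ capture P τ 0 (Fin.last n) := worstCapture_le _ _
    _ < min (capture (Q ε) τ 0 (Fin.last n)) (capture (Q ε) τ (Fin.last n) 0) :=
        lt_min (capture_lt_capture_divert_last hP hA hn hε0 hε1.le 0 τ (by simpa using hτ)
          (by simp [Fin.ext_iff]; omega)) hε
    _ ≤ worstCapture (Q ε) τ := le_worstCapture (min_capture_ends_le hQ (hL.divert hr ε) hn)

lemma capture_last_zero_le_of_isMaxOn (hP : P ∈ rowStochastic ℝ (Fin (n + 1)))
    (hL : P.IsTridiagonal) (hA : P.SubSuperDiagPos) (hn : 2 ≤ n) (hτ : n ≤ τ)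
    (hopt : IsMaxOn (worstCapture · τ)
      {Q | Q ∈ rowStochastic ℝ (Fin (n + 1)) ∧ Q.IsTridiagonal} P) :
    capture P τ (Fin.last n) 0 ≤ capture P τ 0 (Fin.last n) := by
  by_contra! hlt
  obtain ⟨Q, hQ, hQL, hPQ⟩ := exists_worstCapture_lt hP hL hA hn hτ hlt
  exact (isMaxOn_iff.1 hopt Q ⟨hQ, hQL⟩).not_gt hPQ

end Ends

/-- Necessary optimality condition in the line graph: if `P` is an irreducible
row-stochastic line-graph strategy maximizing the worst-case capture probability
(for `n - 1 ≤ τ ≤ 2n - 3`), then the end-to-end capture probabilities in the two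
directions are equal: `ℙ(T_1n ≤ τ) = ℙ(T_n1 ≤ τ)`. -/
theorem stmt_15 (n : ℕ) (hn : 3 ≤ n) (τ : ℕ) (hτ1 : n - 1 ≤ τ)
    (P : Matrix (Fin n) (Fin n) ℝ)
    (hP0 : ∀ a b, 0 ≤ P a b) (hP1 : ∀ a, ∑ b, P a b = 1)
    (hline : ∀ j k : Fin n, (j.val + 1 < k.val ∨ k.val + 1 < j.val) → P j k = 0)
    (hirr : ∀ a b : Fin n, a ≠ b → ∃ m : ℕ, ∃ v : ℕ → Fin n,
      v 0 = a ∧ v m = b ∧ ∀ t < m, 0 < P (v t) (v (t + 1)))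
    (hopt : ∀ Q : Matrix (Fin n) (Fin n) ℝ,
      (∀ a b, 0 ≤ Q a b) → (∀ a, ∑ b, Q a b = 1) →
      (∀ j k : Fin n, (j.val + 1 < k.val ∨ k.val + 1 < j.val) → Q j k = 0) →
      Finset.univ.inf' ⟨((⟨0, by omega⟩ : Fin n), (⟨0, by omega⟩ : Fin n)), Finset.mem_univ _⟩
          (fun p : Fin n × Fin n => ∑ t ∈ Finset.range τ, hitF Q t p.1 p.2) ≤
        Finset.univ.inf' ⟨((⟨0, by omega⟩ : Fin n), (⟨0, by omega⟩ : Fin n)), Finset.mem_univ _⟩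
          (fun p : Fin n × Fin n => ∑ t ∈ Finset.range τ, hitF P t p.1 p.2)) :
    ∑ t ∈ Finset.range τ, hitF P t ⟨0, by omega⟩ ⟨n - 1, by omega⟩ =
      ∑ t ∈ Finset.range τ, hitF P t ⟨n - 1, by omega⟩ ⟨0, by omega⟩ := by
  obtain ⟨n, rfl⟩ : ∃ m, n = m + 1 := ⟨n - 1, by omega⟩
  replace hn : 2 ≤ n := by omega
  replace hτ1 : n ≤ τ := by omega
  have hP : P ∈ rowStochastic ℝ (Fin (n + 1)) := mem_rowStochastic_iff_sum.2 ⟨hP0, hP1⟩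
  have hL : P.IsTridiagonal := hline
  have hA : P.SubSuperDiagPos := hL.subSuperDiagPos hirr
  have hmax : IsMaxOn (worstCapture · τ)
      {Q | Q ∈ rowStochastic ℝ (Fin (n + 1)) ∧ Q.IsTridiagonal} P :=
    isMaxOn_iff.2 fun Q ⟨hQ, hQL⟩ => hopt Q hQ.1 (mem_rowStochastic_iff_sum.1 hQ).2 hQL
  have hrev := capture_last_zero_le_of_isMaxOn (submatrix_rev_mem_rowStochastic hP)
    hL.submatrix_rev hA.submatrix_rev hn hτ1 <| isMaxOn_iff.2 fun Q ⟨hQ, hQL⟩ => by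
      rw [worstCapture_submatrix_rev, ← worstCapture_submatrix_rev Q]
      exact isMaxOn_iff.1 hmax _ ⟨submatrix_rev_mem_rowStochastic hQ, hQL.submatrix_rev⟩
  simp only [capture_submatrix_rev, Fin.rev_zero, Fin.rev_last] at hrev
  exact le_antisymm hrev
    (capture_last_zero_le_of_isMaxOn hP hL hA hn hτ1 hmax)
end
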